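/- For a Split Cycle CCR (equivalently, assuming the beat-path characterization), the strict social preference relation P(f(R)) is acyclic for every profile R. -/

import Mathlib

/-- A profile assigns to each voter a transitive and complete preference relation. -/
structure Profile (V X : Type*) where
  rel : V → X → X → Prop
  total : ∀ i x y, rel i x y ∨ rel i y x
  trans : ∀ i x y z, rel i x y → rel i y z → rel i x z

/-- A collective choice rule maps profiles to binary relations on candidates. -/
abbrev CCR (V X : Type*) := Profile V X → X → X → Prop

/-- Strict part of a relation. -/
def strictPref {X : Type*} (R : X → X → Prop) (x y : X) : Prop := R x y ∧ ¬ R y x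

/-- The restriction of a profile to the pair {x,y}. -/
def Profile.restrict {V X : Type*} (R : Profile V X) (x y : X) : V → X → X → Prop :=
  fun i a b => (a = x ∨ a = y) ∧ (b = x ∨ b = y) ∧ R.rel i a b

/-- The preprofile obtained by removing the pairs ⟨x,y⟩ and ⟨y,x⟩ from every voter's relation. -/
def Profile.remove {V X : Type*} (R : Profile V X) (x y : X) : V → X → X → Prop :=
  fun i a b => R.rel i a b ∧ ¬ ((a = x ∧ b = y) ∨ (a = y ∧ b = x))

/-- Majority margin of x over y in a preprofile. -/
noncomputable def marginOf {V X : Type*} (p : V → X → X → Prop) (x y : X) : ℤ :=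
  (Nat.card {i : V // strictPref (p i) x y} : ℤ) -
    (Nat.card {i : V // strictPref (p i) y x} : ℤ)

/-- A majority cycle (represented by its list of distinct vertices, with edges wrapping
around) for a margin function M. -/
def IsMajCycle {X : Type*} (M : X → X → ℤ) (l : List X) : Prop :=
  2 ≤ l.length ∧ l.Nodup ∧ ∀ p ∈ l.zip (l.rotate 1), 0 < M p.1 p.2

/-- The splitting number of a majority cycle: the smallest margin along the cycle. -/
noncomputable def cycleSplit {X : Type*} (M : X → X → ℤ) (l : List X) : ℤ :=
  (((l.zip (l.rotate 1)).map (fun p => M p.1 p.2)).min?).getD 0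

/-- A Split Cycle CCR: x strictly socially preferred to y iff the margin of x over y is
positive and exceeds the splitting number of every majority cycle containing x and y. -/
def IsSplitCycleCCR {V X : Type*} (f : CCR V X) : Prop :=
  ∀ (R : Profile V X) (x y : X),
    strictPref (f R) x y ↔
      (marginOf R.rel y x < marginOf R.rel x y ∧
        ∀ l : List X, IsMajCycle (marginOf R.rel) l → x ∈ l → y ∈ l →
          cycleSplit (marginOf R.rel) l < marginOf R.rel x y)

/-!
A cycle of strict social preferences contains a simple one, and that is a majority cycle since
every strict social preference has positive margin. Its edge of minimal margin then has margin
equal to the splitting number of this very cycle, so it fails the Split Cycle condition.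
-/

namespace List

variable {α : Type*} {r : α → α → Prop}

theorem exists_eq_append_cons_append_cons_of_not_nodup {l : List α} (h : ¬ l.Nodup) :
    ∃ u b v w, l = u ++ b :: v ++ b :: w := by
  obtain ⟨b, hb⟩ : ∃ b, [b, b] <+ l := by simpa [nodup_iff_sublist] using h
  obtain ⟨s, s', rfl, hs, hs'⟩ := cons_sublist_iff.mp hb
  obtain ⟨u, v, rfl⟩ := append_of_mem hs
  obtain ⟨v', w, rfl⟩ := append_of_mem (singleton_sublist.mp hs')
  exact ⟨u, b, v ++ v', w, by simp⟩

theorem exists_isChain_cons_append_singleton_of_transGen {a b : α}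
    (h : Relation.TransGen r a b) : ∃ t, IsChain r (a :: (t ++ [b])) := by
  induction h using Relation.TransGen.head_induction_on with
  | single hab => exact ⟨[], isChain_pair.mpr hab⟩
  | head hac _ ih =>
    obtain ⟨t, ht⟩ := ih
    exact ⟨_ :: t, isChain_cons_cons.mpr ⟨hac, ht⟩⟩

theorem IsChain.forall_mem_zip_rotate_one {a : α} {t : List α} (h : IsChain r (a :: (t ++ [a]))) :
    ∀ p ∈ (a :: t).zip ((a :: t).rotate 1), r p.1 p.2 := by
  rw [rotate_cons_succ, rotate_zero]
  exact fun _ hp => forall₂_zip (isChain_cons_append_singleton_iff_forall₂.mp h) hp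

theorem exists_nodup_isChain_of_isChain_cons_append_self {a : α} {t : List α}
    (h : IsChain r (a :: (t ++ [a]))) : ∃ b s, (b :: s).Nodup ∧ IsChain r (b :: (s ++ [b])) := by
  induction hn : t.length using Nat.strong_induction_on generalizing a t with
  | _ n ih =>
  by_cases hnd : (a :: t).Nodup
  · exact ⟨a, t, hnd, h⟩
  obtain ⟨u, b, v, w, hsplit⟩ := exists_eq_append_cons_append_cons_of_not_nodup hnd
  have hinfix : b :: (v ++ [b]) <:+: a :: (t ++ [a]) :=
    ⟨u, w ++ [a], by rw [← cons_append (a := a), hsplit]; simp⟩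
  have hlen : v.length < n := by
    have := congrArg length hsplit
    simp only [length_cons, length_append] at this
    omega
  exact ih _ hlen (h.infix hinfix) rfl

end List

theorem exists_mem_zip_rotate_eq_cycleSplit {X : Type*} (M : X → X → ℤ) {l : List X}
    (hl : l ≠ []) : ∃ p ∈ l.zip (l.rotate 1), M p.1 p.2 = cycleSplit M l := by
  set L := (l.zip (l.rotate 1)).map (fun p => M p.1 p.2)
  have hL : L ≠ [] := by simpa [L, List.zip_eq_nil_iff] using hl
  obtain ⟨m, hm⟩ := Option.ne_none_iff_exists'.mp (mt List.min?_eq_none_iff.mp hL)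
  obtain ⟨p, hp, rfl⟩ := List.mem_map.mp (List.min?_mem hm)
  exact ⟨p, hp, by simp [cycleSplit, L, hm]⟩

theorem marginOf_swap {V X : Type*} (p : V → X → X → Prop) (x y : X) :
    marginOf p y x = -marginOf p x y := by
  unfold marginOf
  ring

namespace IsSplitCycleCCR

variable {V X : Type*} {f : CCR V X}

theorem marginOf_pos (hf : IsSplitCycleCCR f) {R : Profile V X} {x y : X}
    (h : strictPref (f R) x y) : 0 < marginOf R.rel x y := by
  have := ((hf R x y).mp h).1
  rw [marginOf_swap] at this
  omega

theorem not_isChain_cons_append_self_of_nodup (hf : IsSplitCycleCCR f) (R : Profile V X) {a : X} {t : List X}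
    (hnd : (a :: t).Nodup) : ¬ List.IsChain (strictPref (f R)) (a :: (t ++ [a])) := by
  intro hc
  have hedge := hc.forall_mem_zip_rotate_one
  rcases t with _ | ⟨b, t⟩
  · obtain ⟨haa, hnaa⟩ := List.isChain_pair.mp hc
    exact hnaa haa
  have hcyc : IsMajCycle (marginOf R.rel) (a :: b :: t) :=
    ⟨by simp, hnd, fun p hp => hf.marginOf_pos (hedge p hp)⟩
  obtain ⟨p, hp, hmin⟩ :=
    exists_mem_zip_rotate_eq_cycleSplit (marginOf R.rel) (List.cons_ne_nil a (b :: t))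
  have hsplit := ((hf R p.1 p.2).mp (hedge p hp)).2 _ hcyc (List.of_mem_zip hp).1
    (List.mem_rotate.mp (List.of_mem_zip hp).2)
  exact hsplit.ne' hmin

end IsSplitCycleCCR

theorem splitcycle_acyclic_general {V X : Type*} (f : CCR V X)
    (hf : IsSplitCycleCCR f) :
    ∀ (R : Profile V X) (x : X), ¬ Relation.TransGen (strictPref (f R)) x x := by
  intro R x hx
  obtain ⟨t, ht⟩ := List.exists_isChain_cons_append_singleton_of_transGen hx
  obtain ⟨b, s, hnd, hs⟩ := List.exists_nodup_isChain_of_isChain_cons_append_self ht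
  exact hf.not_isChain_cons_append_self_of_nodup R hnd hs

/-- The strict social preference relation of a Split Cycle CCR is acyclic. -/
theorem splitcycle_acyclic {V X : Type*} [Finite V] [Finite X] (f : CCR V X)
    (hf : IsSplitCycleCCR f) :
    ∀ (R : Profile V X) (x : X), ¬ Relation.TransGen (strictPref (f R)) x x :=
  splitcycle_acyclic_general f hf
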